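/- arXiv:1809.08554 — 2 statements merged into one kernel-verified Lean document; each statement's English description precedes it below -/
import Mathlib

section
/- Let f : [0,1] → ℝ be continuously differentiable and monotonically nondecreasing, with ∫₀¹ (t − 2/3)·f(t) dt = 0. Define p(x) = (1/(1−3x)³)·( f(1) − 4·f(0) − ∫₀^x (1−3t)²·(f'(1−t) + 8·f'(2t)) dt ) for x ∈ [0, 1/3). Then p(x) ≥ 0 for all x ∈ [0, 1/3), and p(x) → f'(2/3) as x → 1/3 from the left. -/
/-!
Integrating by parts against `(3u - 2)²` and using `∫₀¹ (t - 2/3) f t = 0` gives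
`f 1 - 4 f 0 = ∫₀¹ (3u - 2)² f' u`; the substitutions `u = 1 - t` and `u = 2t` then turn the
bracket in `p x` into `∫_{2x}^{1-x} (3u - 2)² f' u`. As `∫_{2x}^{1-x} (3u - 2)² = (1 - 3x)³`,
`p x` is the mean of `f'` over `[2x, 1 - x]` for the weight `(3u - 2)²`: it is nonnegative since
`f` is nondecreasing, and it tends to `f' (2/3)` as the interval shrinks to `{2/3}`.
-/

open Set Filter MeasureTheory Topology intervalIntegral

theorem integral_two_mul_one_sub_eq {G : ℝ → ℝ} (hG : IntervalIntegrable G volume 0 1)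
    {x : ℝ} (hx₀ : 0 ≤ x) (hx₁ : 2 * x ≤ 1) :
    ∫ u in (2 * x)..(1 - x), G u =
      (∫ u in (0 : ℝ)..1, G u) - ∫ t in (0 : ℝ)..x, (G (1 - t) + 2 * G (2 * t)) := by
  have hsub {a b : ℝ} (ha : a ∈ Icc (0 : ℝ) 1) (hb : b ∈ Icc (0 : ℝ) 1) :
      IntervalIntegrable G volume a b :=
    hG.mono_set ((uIcc_subset_Icc ha hb).trans Icc_subset_uIcc)
  have h0 : (0 : ℝ) ∈ Icc (0 : ℝ) 1 := by norm_num
  have h1 : (1 : ℝ) ∈ Icc (0 : ℝ) 1 := by norm_num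
  have h2x : 2 * x ∈ Icc (0 : ℝ) 1 := ⟨by linarith, hx₁⟩
  have h1x : 1 - x ∈ Icc (0 : ℝ) 1 := ⟨by linarith, by linarith⟩
  have hreflect : IntervalIntegrable (fun t => G (1 - t)) volume 0 x := by
    simpa using ((hsub h1x h1).comp_sub_left 1).symm
  have hdilate : IntervalIntegrable (fun t => G (2 * t)) volume 0 x := by
    simpa using (hsub h0 h2x).comp_mul_left (c := 2)
  rw [integral_add hreflect (hdilate.const_mul 2), intervalIntegral.integral_comp_sub_left,
    intervalIntegral.integral_const_mul, mul_integral_comp_mul_left]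
  simp only [sub_zero, mul_zero]
  linarith [integral_add_adjacent_intervals (hsub h0 h2x) (hsub h2x h1x),
    integral_add_adjacent_intervals (hsub h0 h1x) (hsub h1x h1)]

theorem integral_three_mul_sub_two_sq_mul_deriv {f f' : ℝ → ℝ}
    (hderiv : ∀ x ∈ Icc (0 : ℝ) 1, HasDerivWithinAt f (f' x) (Icc (0 : ℝ) 1) x)
    (hf' : IntervalIntegrable f' volume 0 1) :
    ∫ u in (0 : ℝ)..1, (3 * u - 2) ^ 2 * f' u =
      f 1 - 4 * f 0 - 18 * ∫ u in (0 : ℝ)..1, (u - 2 / 3) * f u := by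
  rw [← uIcc_of_le zero_le_one] at hderiv
  have hw (u : ℝ) : HasDerivAt (fun u : ℝ => (3 * u - 2) ^ 2) (18 * (u - 2 / 3)) u := by
    refine ((((hasDerivAt_id' u).const_mul 3).sub_const 2).pow 2).congr_deriv ?_
    norm_num; ring
  rw [integral_mul_deriv_eq_deriv_mul_of_hasDerivWithinAt (fun u _ => (hw u).hasDerivWithinAt)
    hderiv ((by fun_prop : Continuous fun u : ℝ => 18 * (u - 2 / 3)).intervalIntegrable _ _) hf',
    ← intervalIntegral.integral_const_mul]
  norm_num [mul_assoc]

theorem integral_three_mul_sub_two_sq (x : ℝ) :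
    ∫ u in (2 * x)..(1 - x), (3 * u - 2) ^ 2 = (1 - 3 * x) ^ 3 := by
  have h (u : ℝ) : HasDerivAt (fun u : ℝ => (3 * u - 2) ^ 3 / 9) ((3 * u - 2) ^ 2) u := by
    refine (((((hasDerivAt_id' u).const_mul 3).sub_const 2).pow 3).div_const 9).congr_deriv ?_
    norm_num; ring
  rw [integral_eq_sub_of_hasDerivAt (fun u _ => h u)
    ((by fun_prop : Continuous fun u : ℝ => (3 * u - 2) ^ 2).intervalIntegrable _ _)]
  ring

theorem abs_integral_mul_sub_mul_integral_le {w g : ℝ → ℝ} {a b L ε : ℝ} (hab : a ≤ b)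
    (hw : ∀ u ∈ Icc a b, 0 ≤ w u) (hwi : IntervalIntegrable w volume a b)
    (hwg : IntervalIntegrable (fun u => w u * g u) volume a b)
    (hg : ∀ u ∈ Icc a b, |g u - L| ≤ ε) :
    |(∫ u in a..b, w u * g u) - L * ∫ u in a..b, w u| ≤ ε * ∫ u in a..b, w u := by
  have hdev : (∫ u in a..b, w u * g u) - L * ∫ u in a..b, w u = ∫ u in a..b, w u * (g u - L) := by
    rw [← intervalIntegral.integral_const_mul, ← integral_sub hwg (hwi.const_mul L)]
    exact integral_congr fun u _ => by ring
  rw [hdev, ← Real.norm_eq_abs, ← intervalIntegral.integral_const_mul]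
  refine norm_integral_le_of_norm_le hab (ae_of_all _ fun u hu => ?_) (hwi.const_mul ε)
  have hu' : u ∈ Icc a b := Ioc_subset_Icc_self hu
  rw [Real.norm_eq_abs, abs_mul, abs_of_nonneg (hw u hu'), mul_comm ε]
  exact mul_le_mul_of_nonneg_left (hg u hu') (hw u hu')

theorem tendsto_integral_mul_div_integral {ι : Type*} {l : Filter ι} {a b : ι → ℝ}
    {w g : ℝ → ℝ} {s : Set ℝ} {c : ℝ} (hw : ContinuousOn w s) (hw₀ : ∀ u ∈ s, 0 ≤ w u)
    (hg : ContinuousOn g s) (hc : c ∈ s) (ha : Tendsto a l (𝓝 c)) (hb : Tendsto b l (𝓝 c))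
    (hab : ∀ᶠ i in l, a i ≤ b i ∧ Icc (a i) (b i) ⊆ s)
    (hpos : ∀ᶠ i in l, 0 < ∫ u in a i..b i, w u) :
    Tendsto (fun i => (∫ u in a i..b i, w u * g u) / ∫ u in a i..b i, w u) l (𝓝 (g c)) := by
  rw [Metric.tendsto_nhds]
  intro ε hε
  obtain ⟨δ, hδ, hgδ⟩ := Metric.continuousWithinAt_iff.1 (hg c hc) (ε / 2) (half_pos hε)
  filter_upwards [hab, hpos, ha (Metric.ball_mem_nhds c hδ), hb (Metric.ball_mem_nhds c hδ)]
    with i ⟨hle, hsub⟩ hW hai hbi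
  have hball : Icc (a i) (b i) ⊆ Metric.ball c δ := by
    rw [Real.ball_eq_Ioo] at hai hbi ⊢
    exact Icc_subset_Ioo hai.1 hbi.2
  have hcont : ContinuousOn w (uIcc (a i) (b i)) := by
    rw [uIcc_of_le hle]; exact hw.mono hsub
  have hbound := abs_integral_mul_sub_mul_integral_le hle (fun u hu => hw₀ u (hsub hu))
    (hcont.intervalIntegrable)
    ((hcont.mul (hg.mono (by rwa [uIcc_of_le hle]))).intervalIntegrable)
    (fun u hu => (hgδ (hsub hu) (hball hu)).le)
  rw [Real.dist_eq, div_sub' hW.ne', abs_div, abs_of_pos hW, div_lt_iff₀ hW, mul_comm _ (g c)]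
  linarith [mul_lt_mul_of_pos_right (half_lt_self hε) hW]

theorem sub_integral_comp_eq_integral_sq_mul_deriv {f f' : ℝ → ℝ}
    (hderiv : ∀ x ∈ Icc (0 : ℝ) 1, HasDerivWithinAt f (f' x) (Icc (0 : ℝ) 1) x)
    (hf'cont : ContinuousOn f' (Icc (0 : ℝ) 1))
    (hint : ∫ t in (0 : ℝ)..1, (t - 2 / 3) * f t = 0) {x : ℝ} (hx₀ : 0 ≤ x) (hx₁ : 2 * x ≤ 1) :
    f 1 - 4 * f 0 - ∫ t in (0 : ℝ)..x, (1 - 3 * t) ^ 2 * (f' (1 - t) + 8 * f' (2 * t)) =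
      ∫ u in (2 * x)..(1 - x), (3 * u - 2) ^ 2 * f' u := by
  have hG : ContinuousOn (fun u => (3 * u - 2) ^ 2 * f' u) (Icc 0 1) :=
    (by fun_prop : Continuous fun u : ℝ => (3 * u - 2) ^ 2).continuousOn.mul hf'cont
  rw [integral_two_mul_one_sub_eq (hG.intervalIntegrable_of_Icc zero_le_one) hx₀ hx₁,
    integral_three_mul_sub_two_sq_mul_deriv hderiv (hf'cont.intervalIntegrable_of_Icc zero_le_one),
    hint, mul_zero, sub_zero]
  congr 1
  exact integral_congr fun t _ => by ring

/-- For a continuously differentiable nondecreasing `f : [0,1] → ℝ` with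
`∫₀¹ (t − 2/3) f(t) dt = 0`, the function
`p(x) = (1/(1−3x)³)·(f(1) − 4f(0) − ∫₀^x (1−3t)²(f'(1−t) + 8f'(2t)) dt)`
is nonnegative on `[0, 1/3)` and tends to `f'(2/3)` as `x → 1/3⁻`. -/
theorem p_nonneg_and_limit (f f' : ℝ → ℝ)
    (hderiv : ∀ x ∈ Set.Icc (0 : ℝ) 1, HasDerivWithinAt f (f' x) (Set.Icc (0 : ℝ) 1) x)
    (hf'cont : ContinuousOn f' (Set.Icc (0 : ℝ) 1))
    (hmono : MonotoneOn f (Set.Icc (0 : ℝ) 1))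
    (hint : (∫ t in (0 : ℝ)..1, (t - 2/3) * f t) = 0) :
    (∀ x ∈ Set.Ico (0 : ℝ) (1/3),
      0 ≤ (1 / (1 - 3*x)^3) *
        (f 1 - 4 * f 0 - ∫ t in (0 : ℝ)..x, (1 - 3*t)^2 * (f' (1 - t) + 8 * f' (2*t)))) ∧
    Tendsto (fun x : ℝ => (1 / (1 - 3*x)^3) *
        (f 1 - 4 * f 0 - ∫ t in (0 : ℝ)..x, (1 - 3*t)^2 * (f' (1 - t) + 8 * f' (2*t))))
      (nhdsWithin (1/3 : ℝ) (Set.Iio (1/3 : ℝ))) (nhds (f' (2/3))) := by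
  have hf'_nonneg : ∀ u ∈ Icc (0 : ℝ) 1, 0 ≤ f' u := fun u hu =>
    (hderiv u hu).nonneg_of_monotoneOn (uniqueDiffOn_Icc_zero_one u hu).accPt hmono
  have hp : ∀ x ∈ Ico (0 : ℝ) (1 / 3), (1 / (1 - 3*x)^3) *
        (f 1 - 4 * f 0 - ∫ t in (0 : ℝ)..x, (1 - 3*t)^2 * (f' (1 - t) + 8 * f' (2*t))) =
      (∫ u in (2 * x)..(1 - x), (3 * u - 2) ^ 2 * f' u) /
        ∫ u in (2 * x)..(1 - x), (3 * u - 2) ^ 2 :=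
    fun x hx => by
      rw [sub_integral_comp_eq_integral_sq_mul_deriv hderiv hf'cont hint hx.1 (by linarith [hx.2]),
        integral_three_mul_sub_two_sq, one_div_mul_eq_div]
  have hshrink : ∀ x ∈ Ico (0 : ℝ) (1 / 3), 2 * x ≤ 1 - x ∧ Icc (2 * x) (1 - x) ⊆ Icc 0 1 :=
    fun x hx => ⟨by linarith [hx.2], Icc_subset_Icc (by linarith [hx.1]) (by linarith [hx.1])⟩
  constructor
  · intro x hx
    obtain ⟨hle, hsub⟩ := hshrink x hx
    rw [hp x hx]
    exact div_nonneg
      (integral_nonneg hle fun u hu => mul_nonneg (sq_nonneg _) (hf'_nonneg u (hsub hu)))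
      (integral_nonneg hle fun u _ => sq_nonneg _)
  · have hnear : ∀ᶠ x in 𝓝[<] (1 / 3 : ℝ), x ∈ Ico 0 (1 / 3) :=
      mem_of_superset (Ioo_mem_nhdsLT (by norm_num)) Ioo_subset_Ico_self
    have ha : Tendsto (fun x : ℝ => 2 * x) (𝓝[<] (1 / 3)) (𝓝 (2 / 3)) :=
      ((continuous_const_mul 2).tendsto' _ _ (by norm_num)).mono_left nhdsWithin_le_nhds
    have hb : Tendsto (fun x : ℝ => 1 - x) (𝓝[<] (1 / 3)) (𝓝 (2 / 3)) :=
      ((continuous_sub_left 1).tendsto' _ _ (by norm_num)).mono_left nhdsWithin_le_nhds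
    have hw : Continuous fun u : ℝ => (3 * u - 2) ^ 2 := by fun_prop
    refine (tendsto_integral_mul_div_integral hw.continuousOn (fun u _ => sq_nonneg _) hf'cont
      (by norm_num) ha hb (hnear.mono hshrink) ?_).congr' ?_
    · filter_upwards [hnear] with x hx
      rw [integral_three_mul_sub_two_sq]
      exact pow_pos (by linarith [hx.2]) 3
    · filter_upwards [hnear] with x hx
      exact (hp x hx).symm
end

section
/- Let C : [0,1] → ℝ be continuously differentiable such that t ↦ t·C'(t) is strictly increasing on [0,1]. Let l ∈ (0, 1/6), r = 1 − 2l, c = l·r², let λ and M be as defined, and set f̂(s) = ∫₀^s λ(t)·C'(t·λ(t)) dt for s ∈ [0,1]. Then every point of M is a maximum point of the function T(x,y,z) = f̂(x) + f̂(y) + f̂(z) − C(x·y·z) on [0,1]³: for all (x,y,z) ∈ M and all (a,b,d) ∈ [0,1]³, f̂(a) + f̂(b) + f̂(d) − C(a·b·d) ≤ f̂(x) + f̂(y) + f̂(z) − C(x·y·z). -/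
open Set intervalIntegral

/-- The piecewise function `λ`: `(1−2x)²` on `[0, l)`, `c/x` on `[l, r)` and `x(1−x)/2` on
`[r, 1]`, where `r = 1 − 2l` and `c = l·r²`. -/
noncomputable def lam (l : ℝ) (x : ℝ) : ℝ :=
  if x < l then (1 - 2*x)^2
  else if x < 1 - 2*l then (l * (1 - 2*l)^2) / x
  else x * (1 - x) / 2

/-- The set `M ⊆ [0,1]³`: the union of the three segments
`Mx = {(t, 1−2t, 1−2t) : 0 ≤ t ≤ l}`, `My = {(1−2t, t, 1−2t) : 0 ≤ t ≤ l}`,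
`Mz = {(1−2t, 1−2t, t) : 0 ≤ t ≤ l}` and the two-dimensional piece
`M₂ = {(x,y,z) : l ≤ x,y,z ≤ 1−2l, xyz = l(1−2l)²}`. -/
def Mset (l : ℝ) : Set (ℝ × ℝ × ℝ) :=
  {p | ∃ t, 0 ≤ t ∧ t ≤ l ∧
    (p = (t, 1 - 2*t, 1 - 2*t) ∨ p = (1 - 2*t, t, 1 - 2*t) ∨ p = (1 - 2*t, 1 - 2*t, t))} ∪
  {p | l ≤ p.1 ∧ p.1 ≤ 1 - 2*l ∧ l ≤ p.2.1 ∧ p.2.1 ≤ 1 - 2*l ∧ l ≤ p.2.2 ∧ p.2.2 ≤ 1 - 2*l ∧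
    p.1 * p.2.1 * p.2.2 = l * (1 - 2*l)^2}

/-- The potential `f̂(s) = ∫₀^s λ(t)·C'(t·λ(t)) dt`. -/
noncomputable def fhat (l : ℝ) (C' : ℝ → ℝ) (s : ℝ) : ℝ :=
  ∫ t in (0 : ℝ)..s, lam l t * C' (t * lam l t)

/-!
`T` is continuous on the compact cube `[0,1]³`, so it attains its maximum at some `q`.
Along a coordinate slice `w ↦ f̂(w) − C(w·K)` the derivative is `λ(w)·C'(wλ(w)) − K·C'(wK)`,
which has the sign of `λ(w) − K` because `t ↦ t·C'(t)` is increasing; hence `λ(q₁) = q₂q₃`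
and symmetrically. The function `G(x) = x·λ(x)` increases on `[0,l]`, equals `c` on `[l,r]`
and decreases on `[r,1]`, and these equations give `G(q₁) = G(q₂) = G(q₃) = q₁q₂q₃`, which
forces `q ∈ M`. Finally `T` is constant on `M`: on `M₂` because `f̂' = c·C'(c)/x` there, so
`f̂` is logarithmic and `T` only sees `xyz = c`; on the segments because the derivative of
`t ↦ T(t, 1−2t, 1−2t)` vanishes identically. So every point of `M` has the value `T(q)`.
-/

theorem ContinuousOn.exists_continuous_eqOn_Icc {α β : Type*} [LinearOrder α]
    [TopologicalSpace α] [OrderTopology α] [TopologicalSpace β] {f : α → β} {a b : α}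
    (hab : a ≤ b) (hf : ContinuousOn f (Icc a b)) : ∃ g, Continuous g ∧ EqOn g f (Icc a b) :=
  ⟨IccExtend hab ((Icc a b).domRestrict f), continuous_IccExtend_iff.2 hf.domRestrict,
    fun _ hx => IccExtend_of_mem _ _ hx⟩

section FirstOrder

theorem nonneg_of_isMaxOn_of_deriv_neg {g φ : ℝ → ℝ} {u : ℝ} (hg : ContinuousOn g (Icc 0 1))
    (hφ : Continuous φ) (hφ0 : 0 ≤ φ 0) (hderiv : ∀ w ∈ Ioo (0 : ℝ) 1, φ w < 0 → deriv g w < 0)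
    (hu : u ∈ Icc (0 : ℝ) 1) (hmax : IsMaxOn g (Icc 0 1) u) : 0 ≤ φ u := by
  by_contra! hlt
  have hu0 : 0 < u := hu.1.lt_of_ne (by rintro rfl; linarith)
  obtain ⟨a, ha, hsub⟩ := exists_Ioc_subset_of_mem_nhds'
    (hφ.continuousAt.preimage_mem_nhds (Iio_mem_nhds hlt)) hu0
  have hanti : StrictAntiOn g (Icc a u) := by
    refine strictAntiOn_of_deriv_neg (convex_Icc a u) (hg.mono (Icc_subset_Icc ha.1 hu.2))
      fun w hw => ?_
    rw [interior_Icc] at hw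
    exact hderiv w ⟨ha.1.trans_lt hw.1, hw.2.trans_le hu.2⟩ (hsub ⟨hw.1, hw.2.le⟩)
  exact (hmax ⟨ha.1, ha.2.le.trans hu.2⟩).not_gt
    (hanti (left_mem_Icc.2 ha.2.le) (right_mem_Icc.2 ha.2.le) ha.2)

theorem nonpos_of_isMaxOn_of_deriv_pos {g φ : ℝ → ℝ} {u : ℝ} (hg : ContinuousOn g (Icc 0 1))
    (hφ : Continuous φ) (hφ1 : φ 1 ≤ 0) (hderiv : ∀ w ∈ Ioo (0 : ℝ) 1, 0 < φ w → 0 < deriv g w)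
    (hu : u ∈ Icc (0 : ℝ) 1) (hmax : IsMaxOn g (Icc 0 1) u) : φ u ≤ 0 := by
  have hrefl : MapsTo (fun w : ℝ => 1 - w) (Icc 0 1) (Icc 0 1) :=
    fun w hw => ⟨by linarith [hw.2], by linarith [hw.1]⟩
  have := nonneg_of_isMaxOn_of_deriv_neg (g := fun w => g (1 - w)) (φ := fun w => -φ (1 - w))
    (hg.comp (by fun_prop) hrefl) (by fun_prop) (by simpa using hφ1)
    (fun w hw hw' => by
      rw [deriv_comp_const_sub g 1 w]
      linarith [hderiv (1 - w) ⟨by linarith [hw.2], by linarith [hw.1]⟩ (by linarith)])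
    (hrefl hu) (fun w hw => by simpa using hmax (hrefl hw))
  simpa using this

variable {F Λ C C' : ℝ → ℝ}

theorem mul_comp_mul_lt_of_strictMonoOn (hU : StrictMonoOn (fun t => t * C' t) (Icc 0 1))
    {w a b : ℝ} (hw : 0 < w) (ha : w * a ∈ Icc (0 : ℝ) 1) (hb : w * b ∈ Icc (0 : ℝ) 1)
    (hab : a < b) : a * C' (w * a) < b * C' (w * b) := by
  have := hU ha hb (mul_lt_mul_of_pos_left hab hw)
  simp only [mul_assoc] at this
  exact lt_of_mul_lt_mul_left this hw.le

theorem hasDerivAt_sub_comp_mul (hC : ∀ t ∈ Icc (0 : ℝ) 1, HasDerivWithinAt C (C' t) (Icc 0 1) t)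
    {K w F' : ℝ} (hK : K ∈ Icc (0 : ℝ) 1) (hw : w ∈ Ioo (0 : ℝ) 1) (hF : HasDerivAt F F' w) :
    HasDerivAt (fun w => F w - C (w * K)) (F' - C' (w * K) * K) w := by
  have hmulK : MapsTo (· * K) (Icc (0 : ℝ) 1) (Icc 0 1) := fun _ hv => unitInterval.mul_mem hv hK
  have hCK := (hC _ (hmulK (Ioo_subset_Icc_self hw))).comp w
    (hasDerivAt_mul_const K).hasDerivWithinAt hmulK
  exact hF.sub (hCK.hasDerivAt (Icc_mem_nhds hw.1 hw.2))

theorem eq_of_isMaxOn_sub_comp_mul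
    (hC : ∀ t ∈ Icc (0 : ℝ) 1, HasDerivWithinAt C (C' t) (Icc 0 1) t)
    (hU : StrictMonoOn (fun t => t * C' t) (Icc 0 1))
    (hΛ : Continuous Λ) (hΛI : MapsTo Λ (Icc 0 1) (Icc 0 1)) (hΛ0 : Λ 0 = 1) (hΛ1 : Λ 1 = 0)
    (hF : ∀ w, HasDerivAt F (Λ w * C' (w * Λ w)) w)
    {K u : ℝ} (hK : K ∈ Icc (0 : ℝ) 1) (hu : u ∈ Icc (0 : ℝ) 1)
    (hmax : IsMaxOn (fun w => F w - C (w * K)) (Icc 0 1) u) : Λ u = K := by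
  have hg : ContinuousOn (fun w => F w - C (w * K)) (Icc 0 1) :=
    (continuous_iff_continuousAt.2 fun w => (hF w).continuousAt).continuousOn.sub
      (ContinuousOn.comp (fun t ht => (hC t ht).continuousWithinAt)
        (continuous_mul_const K).continuousOn fun _ hv => unitInterval.mul_mem hv hK)
  have hg' : ∀ w ∈ Ioo (0 : ℝ) 1,
      deriv (fun w => F w - C (w * K)) w = Λ w * C' (w * Λ w) - K * C' (w * K) := fun w hw => by
    rw [(hasDerivAt_sub_comp_mul hC hK hw (hF w)).deriv]
    ring
  have hmem : ∀ w ∈ Ioo (0 : ℝ) 1, w * Λ w ∈ Icc (0 : ℝ) 1 ∧ w * K ∈ Icc (0 : ℝ) 1 :=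
    fun w hw => ⟨unitInterval.mul_mem (Ioo_subset_Icc_self hw) (hΛI (Ioo_subset_Icc_self hw)),
      unitInterval.mul_mem (Ioo_subset_Icc_self hw) hK⟩
  -- `w` times the slice derivative is `U (w Λ(w)) - U (w K)` for the increasing `U t = t C'(t)`
  refine le_antisymm (sub_nonpos.1 (nonpos_of_isMaxOn_of_deriv_pos (φ := fun w => Λ w - K) hg
    (by fun_prop) (by simp [hΛ1, hK.1]) (fun w hw h => ?_) hu hmax))
    (sub_nonneg.1 (nonneg_of_isMaxOn_of_deriv_neg (φ := fun w => Λ w - K) hg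
    (by fun_prop) (by simp [hΛ0, hK.2]) (fun w hw h => ?_) hu hmax))
  · rw [hg' w hw, sub_pos]
    exact mul_comp_mul_lt_of_strictMonoOn hU hw.1 (hmem w hw).2 (hmem w hw).1 (sub_pos.1 h)
  · rw [hg' w hw, sub_neg]
    exact mul_comp_mul_lt_of_strictMonoOn hU hw.1 (hmem w hw).1 (hmem w hw).2 (sub_neg.1 h)

end FirstOrder

section Lam

variable {l x : ℝ}

theorem lam_of_le (hl : l ∈ Ioo (0 : ℝ) (1/6)) (hx : x ≤ l) : lam l x = (1 - 2 * x) ^ 2 := by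
  rcases hx.lt_or_eq with hx | rfl
  · simp [lam, hx]
  · have : x ≠ 0 := hl.1.ne'
    rw [lam, if_neg (lt_irrefl x), if_pos (by linarith [hl.2])]
    field_simp

theorem lam_of_mem_Icc (hl0 : 0 < l) (hx : x ∈ Icc l (1 - 2 * l)) :
    lam l x = l * (1 - 2 * l) ^ 2 / x := by
  rcases hx.2.lt_or_eq with hxr | hxr
  · simp [lam, not_lt.2 hx.1, hxr]
  · have : (1 : ℝ) - 2 * l ≠ 0 := by linarith [hx.1]
    rw [lam, if_neg (not_lt.2 hx.1), if_neg (not_lt.2 hxr.ge), hxr]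
    field_simp
    ring

theorem lam_of_ge (hl : l ∈ Ioo (0 : ℝ) (1/6)) (hx : 1 - 2 * l ≤ x) :
    lam l x = x * (1 - x) / 2 := by
  simp [lam, not_lt.2 hx, show ¬ x < l by linarith [hl.2]]

theorem continuous_lam (hl : l ∈ Ioo (0 : ℝ) (1/6)) : Continuous (lam l) := by
  obtain ⟨hl0, hl6⟩ := hl
  refine continuous_if ?_ (by fun_prop) (ContinuousOn.if ?_ ?_ (by fun_prop))
  · intro a ha
    obtain rfl : a = l := by simpa [Iio_def] using ha
    rw [if_pos (by linarith)]
    field_simp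
  · intro a ⟨_, ha⟩
    obtain rfl : a = 1 - 2 * l := by simpa [Iio_def] using ha
    field_simp
    ring
  · refine continuousOn_const.div continuousOn_id fun a ha => ?_
    have : l ≤ a := by simpa [Ici_def] using ha.1
    exact (hl0.trans_le this).ne'

theorem lam_zero (hl : l ∈ Ioo (0 : ℝ) (1/6)) : lam l 0 = 1 := by
  simp [lam_of_le hl hl.1.le]

theorem lam_one (hl : l ∈ Ioo (0 : ℝ) (1/6)) : lam l 1 = 0 := by
  simp [lam_of_ge (x := 1) hl (by linarith [hl.1])]

theorem mapsTo_lam (hl : l ∈ Ioo (0 : ℝ) (1/6)) : MapsTo (lam l) (Icc 0 1) (Icc 0 1) := by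
  intro x ⟨hx0, hx1⟩
  have ⟨hl0, hl6⟩ := hl
  rcases le_or_gt x l with h | h
  · rw [lam_of_le hl h]
    exact ⟨by positivity, by nlinarith⟩
  rcases le_or_gt x (1 - 2 * l) with h' | h'
  · rw [lam_of_mem_Icc hl0 ⟨h.le, h'⟩]
    have : (1 - 2 * l) ^ 2 ≤ 1 := by nlinarith
    exact ⟨by positivity, (div_le_one (hl0.trans h)).2 (by nlinarith)⟩
  · rw [lam_of_ge hl h'.le]
    exact ⟨by nlinarith, by nlinarith⟩

theorem mul_lam_mem_Icc (hl : l ∈ Ioo (0 : ℝ) (1/6)) (hx : x ∈ Icc (0 : ℝ) 1) :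
    x * lam l x ∈ Icc (0 : ℝ) 1 :=
  have h := mapsTo_lam hl hx
  ⟨mul_nonneg hx.1 h.1, mul_le_one₀ hx.2 h.1 h.2⟩

theorem mul_lam_of_mem_Icc (hl0 : 0 < l) (hx : x ∈ Icc l (1 - 2 * l)) :
    x * lam l x = l * (1 - 2 * l) ^ 2 := by
  rw [lam_of_mem_Icc hl0 hx]
  field_simp [(hl0.trans_le hx.1).ne']

theorem strictMonoOn_mul_lam (hl : l ∈ Ioo (0 : ℝ) (1/6)) :
    StrictMonoOn (fun x => x * lam l x) (Icc 0 l) := by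
  intro x hx y hy hxy
  simp only [lam_of_le hl hx.2, lam_of_le hl hy.2]
  have : 0 < 1 - 4 * (x + y) + 4 * (x ^ 2 + x * y + y ^ 2) := by nlinarith [hy.2, hl.2]
  nlinarith [mul_pos (sub_pos.2 hxy) this]

theorem strictAntiOn_mul_lam (hl : l ∈ Ioo (0 : ℝ) (1/6)) :
    StrictAntiOn (fun x => x * lam l x) (Icc (1 - 2 * l) 1) := by
  intro x hx y hy hxy
  simp only [lam_of_ge hl hx.1, lam_of_ge hl hy.1]
  have : 0 < x ^ 2 + x * y + y ^ 2 - x - y := by nlinarith [hx.1, hy.2, hl.2]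
  nlinarith [mul_pos (sub_pos.2 hxy) this]

theorem mem_Icc_of_mul_lam_eq (hl : l ∈ Ioo (0 : ℝ) (1/6)) (hx : x ∈ Icc (0 : ℝ) 1)
    (h : x * lam l x = l * (1 - 2 * l) ^ 2) : x ∈ Icc l (1 - 2 * l) := by
  have hlr : l ≤ 1 - 2 * l := by linarith [hl.2]
  by_contra hx'
  rcases not_and_or.1 hx' with h' | h' <;> rw [not_le] at h'
  · have := strictMonoOn_mul_lam hl ⟨hx.1, h'.le⟩ ⟨hl.1.le, le_rfl⟩ h'
    simp only [mul_lam_of_mem_Icc hl.1 ⟨le_rfl, hlr⟩] at this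
    linarith
  · have := strictAntiOn_mul_lam hl ⟨le_rfl, by linarith [hl.1]⟩ ⟨h'.le, hx.2⟩ h'
    simp only [mul_lam_of_mem_Icc hl.1 ⟨hlr, le_rfl⟩] at this
    linarith

end Lam

section Critical

variable {l x y z : ℝ}

theorem eq_one_sub_two_mul_of_crit (hl : l ∈ Ioo (0 : ℝ) (1/6)) (hx : x ∈ Icc (0 : ℝ) 1)
    (hy : y ∈ Icc (0 : ℝ) 1) (hz : z ∈ Icc (0 : ℝ) 1)
    (ex : lam l x = y * z) (ey : lam l y = x * z) (ez : lam l z = x * y) (hxl : x < l) :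
    y = 1 - 2 * x ∧ z = 1 - 2 * x := by
  have ⟨hl0, hl6⟩ := hl
  have hyz : y * z = (1 - 2 * x) ^ 2 := by rw [← ex, lam_of_le hl hxl.le]
  have hGx : x * lam l x < l * (1 - 2 * l) ^ 2 := by
    have := strictMonoOn_mul_lam hl ⟨hx.1, hxl.le⟩ ⟨hl0.le, le_rfl⟩ hxl
    simpa only [mul_lam_of_mem_Icc hl0 ⟨le_rfl, by linarith⟩] using this
  -- `G(w) = G(x) < c` keeps `w` out of `[l, r]`, and `w ≥ yz = (1 - 2x)² > l`
  have hright : ∀ w ∈ Icc (0 : ℝ) 1, (1 - 2 * x) ^ 2 ≤ w → w * lam l w = x * lam l x →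
      1 - 2 * l < w := by
    intro w hw hxw hGw
    by_contra hw'
    have hlw : l ≤ w := by nlinarith
    exact hGx.ne (hGw ▸ mul_lam_of_mem_Icc hl0 ⟨hlw, not_lt.1 hw'⟩)
  have hyr := hright y hy (by nlinarith [hy.1, hz.2]) (by rw [ey, ex]; ring)
  have hzr := hright z hz (by nlinarith [hz.1, hy.2]) (by rw [ez, ex]; ring)
  have hyz' : y = z := (strictAntiOn_mul_lam hl).injOn ⟨hyr.le, hy.2⟩ ⟨hzr.le, hz.2⟩
    (by rw [ey, ez]; ring)
  subst hyz'
  have : y = 1 - 2 * x := (pow_left_inj₀ hy.1 (by linarith) two_ne_zero).1 (by rw [← hyz]; ring)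
  exact ⟨this, this⟩

theorem lam_lt_mul_of_lt (hl : l ∈ Ioo (0 : ℝ) (1/6)) (hx : 1 - 2 * l < x)
    (hy : 1 - 2 * l < y) (hz : 1 - 2 * l < z) : lam l x < y * z := by
  rw [lam_of_ge hl hx.le]
  nlinarith [hl.2]

theorem mem_Mset_of_crit (hl : l ∈ Ioo (0 : ℝ) (1/6)) (hx : x ∈ Icc (0 : ℝ) 1)
    (hy : y ∈ Icc (0 : ℝ) 1) (hz : z ∈ Icc (0 : ℝ) 1)
    (ex : lam l x = y * z) (ey : lam l y = x * z) (ez : lam l z = x * y) :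
    (x, y, z) ∈ Mset l := by
  have hGx : x * lam l x = x * y * z := by rw [ex]; ring
  have hGy : y * lam l y = x * y * z := by rw [ey]; ring
  have hGz : z * lam l z = x * y * z := by rw [ez]; ring
  by_cases hc : x * y * z = l * (1 - 2 * l) ^ 2
  · obtain ⟨hx1, hx2⟩ := mem_Icc_of_mul_lam_eq hl hx (hGx.trans hc)
    obtain ⟨hy1, hy2⟩ := mem_Icc_of_mul_lam_eq hl hy (hGy.trans hc)
    obtain ⟨hz1, hz2⟩ := mem_Icc_of_mul_lam_eq hl hz (hGz.trans hc)
    exact Or.inr ⟨hx1, hx2, hy1, hy2, hz1, hz2, hc⟩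
  have hout : ∀ w : ℝ, w * lam l w = x * y * z → w < l ∨ 1 - 2 * l < w := fun w hw => by
    by_contra! h
    exact hc (hw ▸ mul_lam_of_mem_Icc hl.1 h)
  left
  rcases hout x hGx with hxl | hxr
  · obtain ⟨hy', hz'⟩ := eq_one_sub_two_mul_of_crit hl hx hy hz ex ey ez hxl
    exact ⟨x, hx.1, hxl.le, Or.inl (by rw [hy', hz'])⟩
  rcases hout y hGy with hyl | hyr
  · obtain ⟨hx', hz'⟩ := eq_one_sub_two_mul_of_crit hl hy hx hz ey ex (by rw [ez, mul_comm]) hyl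
    exact ⟨y, hy.1, hyl.le, Or.inr (Or.inl (by rw [hx', hz']))⟩
  rcases hout z hGz with hzl | hzr
  · obtain ⟨hx', hy'⟩ := eq_one_sub_two_mul_of_crit hl hz hx hy ez (by rw [ex, mul_comm])
      (by rw [ey, mul_comm]) hzl
    exact ⟨z, hz.1, hzl.le, Or.inr (Or.inr (by rw [hx', hy']))⟩
  exact ((lam_lt_mul_of_lt hl hxr hyr hzr).ne ex).elim

end Critical

section Potential

variable {l : ℝ} {C C' : ℝ → ℝ}

theorem continuous_integrand (hl : l ∈ Ioo (0 : ℝ) (1/6)) (hC' : Continuous C') :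
    Continuous fun t => lam l t * C' (t * lam l t) :=
  (continuous_lam hl).mul (hC'.comp (continuous_id.mul (continuous_lam hl)))

theorem fhat_congr (hl : l ∈ Ioo (0 : ℝ) (1/6)) {D : ℝ → ℝ} (hD : EqOn D C' (Icc 0 1)) {s : ℝ}
    (hs : s ∈ Icc (0 : ℝ) 1) : fhat l D s = fhat l C' s := by
  refine integral_congr fun t ht => ?_
  rw [uIcc_of_le hs.1] at ht
  simp only [hD (mul_lam_mem_Icc hl ⟨ht.1, ht.2.trans hs.2⟩)]

theorem hasDerivAt_fhat (hl : l ∈ Ioo (0 : ℝ) (1/6)) (hC' : Continuous C') (s : ℝ) :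
    HasDerivAt (fhat l C') (lam l s * C' (s * lam l s)) s :=
  ((continuous_integrand hl hC').integral_hasStrictDerivAt 0 s).hasDerivAt

theorem fhat_of_mem_Icc (hl : l ∈ Ioo (0 : ℝ) (1/6)) (hC' : Continuous C') {x : ℝ}
    (hx : x ∈ Icc l (1 - 2 * l)) :
    fhat l C' x = fhat l C' l +
      l * (1 - 2 * l) ^ 2 * C' (l * (1 - 2 * l) ^ 2) * Real.log (x / l) := by
  have hsub : fhat l C' x - fhat l C' l = ∫ t in l..x, lam l t * C' (t * lam l t) :=
    integral_interval_sub_left ((continuous_integrand hl hC').intervalIntegrable _ _)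
      ((continuous_integrand hl hC').intervalIntegrable _ _)
  have hcongr : EqOn (fun t => lam l t * C' (t * lam l t))
      (fun t => l * (1 - 2 * l) ^ 2 * C' (l * (1 - 2 * l) ^ 2) * t⁻¹) (uIcc l x) := by
    intro t ht
    rw [uIcc_of_le hx.1] at ht
    have ht' : t ∈ Icc l (1 - 2 * l) := ⟨ht.1, ht.2.trans hx.2⟩
    dsimp only
    rw [mul_lam_of_mem_Icc hl.1 ht', lam_of_mem_Icc hl.1 ht']
    ring
  rw [integral_congr hcongr, integral_const_mul,
    integral_inv_of_pos hl.1 (hl.1.trans_le hx.1)] at hsub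
  linarith

theorem fhat_add_two_mul_fhat_one_sub_two_mul (hl : l ∈ Ioo (0 : ℝ) (1/6))
    (hC : ∀ t ∈ Icc (0 : ℝ) 1, HasDerivWithinAt C (C' t) (Icc 0 1) t) (hC' : Continuous C')
    {t : ℝ} (ht : t ∈ Icc 0 l) :
    fhat l C' t + 2 * fhat l C' (1 - 2 * t) - C (t * (1 - 2 * t) ^ 2) =
      fhat l C' l + 2 * fhat l C' (1 - 2 * l) - C (l * (1 - 2 * l) ^ 2) := by
  have hg : MapsTo (fun s : ℝ => s * (1 - 2 * s) ^ 2) (Icc 0 l) (Icc 0 1) := fun s hs =>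
    have : (1 - 2 * s) ^ 2 ≤ 1 := by nlinarith [hs.1, hs.2, hl.2]
    ⟨by have := hs.1; positivity, by dsimp only; nlinarith [hs.1, hs.2, hl.2]⟩
  -- both `f̂`-terms evaluate `C'` at `s(1 - 2s)²`, and `λ(s) - 4λ(1 - 2s) = (s(1 - 2s)²)'`
  have hderiv : ∀ s ∈ Icc 0 l, HasDerivWithinAt
      (fun s => fhat l C' s + 2 * fhat l C' (1 - 2 * s) - C (s * (1 - 2 * s) ^ 2))
      0 (Icc 0 l) s := by
    intro s hs
    have hlin : HasDerivAt (fun s : ℝ => 1 - 2 * s) (-2) s := by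
      simpa using ((hasDerivAt_id s).const_mul 2).const_sub 1
    have hpoly : HasDerivAt (fun s : ℝ => s * (1 - 2 * s) ^ 2)
        ((1 - 2 * s) ^ 2 - 4 * s * (1 - 2 * s)) s := by
      refine ((hasDerivAt_id' s).fun_mul (hlin.fun_pow 2)).congr_deriv ?_
      push_cast
      ring
    have h1 := hasDerivAt_fhat hl hC' s
    have h2 := (hasDerivAt_fhat hl hC' (1 - 2 * s)).comp s hlin
    have h3 := (hC _ (hg hs)).comp s hpoly.hasDerivWithinAt hg
    have hr : (1 - 2 * s) * ((1 - 2 * s) * (1 - (1 - 2 * s)) / 2) = s * (1 - 2 * s) ^ 2 := by ring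
    rw [lam_of_le hl hs.2] at h1
    rw [lam_of_ge hl (by linarith [hs.2]), hr] at h2
    exact ((h1.hasDerivWithinAt.fun_add (h2.hasDerivWithinAt.const_mul 2)).fun_sub h3).congr_deriv
      (by ring)
  have := (convex_Icc 0 l).norm_image_sub_le_of_norm_hasDerivWithin_le (C := 0) hderiv
    (fun _ _ => by simp) ht ⟨hl.1.le, le_rfl⟩
  rw [zero_mul, norm_le_zero_iff, sub_eq_zero] at this
  exact this.symm

end Potential

/-- The function `T` of the statement. -/
noncomputable def objective (l : ℝ) (C C' : ℝ → ℝ) (p : ℝ × ℝ × ℝ) : ℝ :=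
  fhat l C' p.1 + fhat l C' p.2.1 + fhat l C' p.2.2 - C (p.1 * p.2.1 * p.2.2)

section Objective

variable {l : ℝ} {C C' : ℝ → ℝ}

theorem objective_of_mem_Icc (hl : l ∈ Ioo (0 : ℝ) (1/6)) (hC' : Continuous C') {x y z : ℝ}
    (hx : x ∈ Icc l (1 - 2 * l)) (hy : y ∈ Icc l (1 - 2 * l)) (hz : z ∈ Icc l (1 - 2 * l))
    (hxyz : x * y * z = l * (1 - 2 * l) ^ 2) :
    objective l C C' (x, y, z) = 3 * fhat l C' l + l * (1 - 2 * l) ^ 2 *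
      C' (l * (1 - 2 * l) ^ 2) * Real.log (l * (1 - 2 * l) ^ 2 / l ^ 3) -
        C (l * (1 - 2 * l) ^ 2) := by
  have hne : ∀ w ∈ Icc l (1 - 2 * l), w / l ≠ 0 := fun w hw =>
    (div_pos (hl.1.trans_le hw.1) hl.1).ne'
  have hlog : Real.log (x / l) + Real.log (y / l) + Real.log (z / l) =
      Real.log (l * (1 - 2 * l) ^ 2 / l ^ 3) := by
    rw [← Real.log_mul (hne x hx) (hne y hy),
      ← Real.log_mul (mul_ne_zero (hne x hx) (hne y hy)) (hne z hz), ← hxyz]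
    congr 1
    ring
  simp only [objective, fhat_of_mem_Icc hl hC' hx, fhat_of_mem_Icc hl hC' hy,
    fhat_of_mem_Icc hl hC' hz, hxyz, ← hlog]
  ring

theorem objective_of_mem_Mset (hl : l ∈ Ioo (0 : ℝ) (1/6))
    (hC : ∀ t ∈ Icc (0 : ℝ) 1, HasDerivWithinAt C (C' t) (Icc 0 1) t) (hC' : Continuous C')
    {p : ℝ × ℝ × ℝ} (hp : p ∈ Mset l) :
    objective l C C' p = 3 * fhat l C' l + l * (1 - 2 * l) ^ 2 *
      C' (l * (1 - 2 * l) ^ 2) * Real.log (l * (1 - 2 * l) ^ 2 / l ^ 3) -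
        C (l * (1 - 2 * l) ^ 2) := by
  rcases hp with ⟨t, ht0, htl, hpt⟩ | ⟨hx1, hx2, hy1, hy2, hz1, hz2, hxyz⟩
  · have hlr : l ≤ 1 - 2 * l := by linarith [hl.2]
    have hseg := fhat_add_two_mul_fhat_one_sub_two_mul hl hC hC' ⟨ht0, htl⟩
    have hend := objective_of_mem_Icc (C := C) hl hC' ⟨le_rfl, hlr⟩ ⟨hlr, le_rfl⟩ ⟨hlr, le_rfl⟩
      (by ring)
    simp only [objective] at hend
    rcases hpt with rfl | rfl | rfl <;> simp only [objective] <;> ring_nf at hseg hend ⊢ <;>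
      linarith
  · exact objective_of_mem_Icc hl hC' ⟨hx1, hx2⟩ ⟨hy1, hy2⟩ ⟨hz1, hz2⟩ hxyz

end Objective

theorem Mset_subset {l : ℝ} (hl : l ∈ Ioo (0 : ℝ) (1/6)) :
    Mset l ⊆ Icc 0 1 ×ˢ Icc 0 1 ×ˢ Icc 0 1 := by
  obtain ⟨hl0, hl6⟩ := hl
  rintro p (⟨t, ht0, htl, rfl | rfl | rfl⟩ | ⟨h1, h2, h3, h4, h5, h6, -⟩) <;>
    exact ⟨⟨by linarith, by linarith⟩, ⟨by linarith, by linarith⟩, ⟨by linarith, by linarith⟩⟩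

section Maximum

variable {l : ℝ} {C C' : ℝ → ℝ}

theorem continuousOn_objective (hl : l ∈ Ioo (0 : ℝ) (1/6))
    (hC : ∀ t ∈ Icc (0 : ℝ) 1, HasDerivWithinAt C (C' t) (Icc 0 1) t) (hC' : Continuous C') :
    ContinuousOn (objective l C C') (Icc 0 1 ×ˢ Icc 0 1 ×ˢ Icc 0 1) := by
  have hf : Continuous (fhat l C') :=
    continuous_iff_continuousAt.2 fun s => (hasDerivAt_fhat hl hC' s).continuousAt
  refine (Continuous.continuousOn (by fun_prop)).sub
    (ContinuousOn.comp (fun t ht => (hC t ht).continuousWithinAt) (by fun_prop) ?_)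
  rintro ⟨x, y, z⟩ ⟨hx, hy, hz⟩
  exact unitInterval.mul_mem (unitInterval.mul_mem hx hy) hz

theorem crit_of_isMaxOn (hl : l ∈ Ioo (0 : ℝ) (1/6))
    (hC : ∀ t ∈ Icc (0 : ℝ) 1, HasDerivWithinAt C (C' t) (Icc 0 1) t)
    (hU : StrictMonoOn (fun t => t * C' t) (Icc 0 1)) (hC' : Continuous C') {x y z : ℝ}
    (hx : x ∈ Icc (0 : ℝ) 1) (hy : y ∈ Icc (0 : ℝ) 1) (hz : z ∈ Icc (0 : ℝ) 1)
    (hmax : IsMaxOn (objective l C C') (Icc 0 1 ×ˢ Icc 0 1 ×ˢ Icc 0 1) (x, y, z)) :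
    lam l x = y * z ∧ lam l y = x * z ∧ lam l z = x * y := by
  have hslice : ∀ {u K : ℝ}, u ∈ Icc (0 : ℝ) 1 → K ∈ Icc (0 : ℝ) 1 →
      (∀ w ∈ Icc (0 : ℝ) 1, fhat l C' w - C (w * K) ≤ fhat l C' u - C (u * K)) → lam l u = K :=
    fun hu hK h => eq_of_isMaxOn_sub_comp_mul hC hU (continuous_lam hl) (mapsTo_lam hl)
      (lam_zero hl) (lam_one hl) (hasDerivAt_fhat hl hC') hK hu (isMaxOn_iff.2 h)
  refine ⟨hslice hx (unitInterval.mul_mem hy hz) fun w hw => ?_,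
    hslice hy (unitInterval.mul_mem hx hz) fun w hw => ?_,
    hslice hz (unitInterval.mul_mem hx hy) fun w hw => ?_⟩ <;>
  [have := isMaxOn_iff.1 hmax (w, y, z) ⟨hw, hy, hz⟩;
    have := isMaxOn_iff.1 hmax (x, w, z) ⟨hx, hw, hz⟩;
    have := isMaxOn_iff.1 hmax (x, y, w) ⟨hx, hy, hw⟩] <;>
  · simp only [objective] at this
    ring_nf at this ⊢
    linarith

theorem objective_le_of_mem_Mset (hl : l ∈ Ioo (0 : ℝ) (1/6))
    (hC : ∀ t ∈ Icc (0 : ℝ) 1, HasDerivWithinAt C (C' t) (Icc 0 1) t)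
    (hU : StrictMonoOn (fun t => t * C' t) (Icc 0 1)) (hC' : Continuous C')
    {p q : ℝ × ℝ × ℝ} (hp : p ∈ Mset l) (hq : q ∈ Icc 0 1 ×ˢ Icc 0 1 ×ˢ Icc 0 1) :
    objective l C C' q ≤ objective l C C' p := by
  obtain ⟨⟨x, y, z⟩, ⟨hx, hy, hz⟩, hmax⟩ :=
    (isCompact_Icc.prod (isCompact_Icc.prod isCompact_Icc)).exists_isMaxOn
      ⟨(0, 0, 0), by simp⟩ (continuousOn_objective hl hC hC')
  obtain ⟨ex, ey, ez⟩ := crit_of_isMaxOn hl hC hU hC' hx hy hz hmax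
  calc objective l C C' q ≤ objective l C C' (x, y, z) := hmax hq
    _ = objective l C C' p := by
      rw [objective_of_mem_Mset hl hC hC' (mem_Mset_of_crit hl hx hy hz ex ey ez),
        objective_of_mem_Mset hl hC hC' hp]

end Maximum

/-- Every point of `M` is a maximum point of
`T(x,y,z) = f̂(x) + f̂(y) + f̂(z) − C(xyz)` on `[0,1]³`. -/
theorem M_subset_argmax (C C' : ℝ → ℝ)
    (hC : ∀ t ∈ Set.Icc (0 : ℝ) 1, HasDerivWithinAt C (C' t) (Set.Icc (0 : ℝ) 1) t)
    (hC' : ContinuousOn C' (Set.Icc (0 : ℝ) 1))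
    (hU : StrictMonoOn (fun t => t * C' t) (Set.Icc (0 : ℝ) 1))
    (l : ℝ) (hl : l ∈ Set.Ioo (0 : ℝ) (1/6)) :
    ∀ p ∈ Mset l, ∀ a ∈ Set.Icc (0 : ℝ) 1, ∀ b ∈ Set.Icc (0 : ℝ) 1, ∀ d ∈ Set.Icc (0 : ℝ) 1,
      fhat l C' a + fhat l C' b + fhat l C' d - C (a * b * d) ≤
        fhat l C' p.1 + fhat l C' p.2.1 + fhat l C' p.2.2 - C (p.1 * p.2.1 * p.2.2) := by
  intro p hp a ha b hb d hd
  obtain ⟨D, hD, hDC'⟩ := hC'.exists_continuous_eqOn_Icc zero_le_one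
  have hfhat : EqOn (fhat l D) (fhat l C') (Icc 0 1) := fun s hs => fhat_congr hl hDC' hs
  obtain ⟨hp1, hp2, hp3⟩ := Mset_subset hl hp
  have := objective_le_of_mem_Mset hl (fun t ht => hDC' ht ▸ hC t ht)
    (hU.congr fun t ht => by simp only [hDC' ht]) hD hp (q := (a, b, d)) ⟨ha, hb, hd⟩
  simpa only [objective, hfhat ha, hfhat hb, hfhat hd, hfhat hp1, hfhat hp2, hfhat hp3] using this
end
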